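/- Fix 3 ≤ k ≤ n-2 ≤ q-2, S = {a_1,...,a_n} ⊆ F_q distinct, v ∈ (F_q^*)^n. Let g(x) = g_{k-1} x^{k-1} + f(x) with g_{k-1} ∈ F_q^* and f ∈ V_k, let f_k be the coefficient of x^k in f, and set w = (v_1 g(a_1),...,v_n g(a_n), u_{n+1} v_{n+1}) for u_{n+1}, v_{n+1} ∈ F_q. If u_{n+1} v_{n+1} = f_k, then w is a deep hole of the code C_k(S,v,∞). -/
import Mathlib


open Finset Polynomial

section Defs
variable {F : Type*} [Field F] [DecidableEq F]

noncomputable def minWt {n : ℕ} (C : Submodule F (Fin n → F)) : ℕ :=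
  sInf {w | ∃ c ∈ C, c ≠ 0 ∧ hammingNorm c = w}

noncomputable def distToCode {n : ℕ} (C : Submodule F (Fin n → F)) (u : Fin n → F) : ℕ :=
  sInf {d | ∃ c ∈ C, hammingDist u c = d}

noncomputable def covRad {n : ℕ} (C : Submodule F (Fin n → F)) : ℕ :=
  sSup {d | ∃ u : Fin n → F, distToCode C u = d}

def IsDeepHole {n : ℕ} (C : Submodule F (Fin n → F)) (u : Fin n → F) : Prop :=
  distToCode C u = covRad C

def dualCode {n : ℕ} (C : Submodule F (Fin n → F)) : Submodule F (Fin n → F) where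
  carrier := {x | ∀ c ∈ C, ∑ i, x i * c i = 0}
  zero_mem' := by intro c _; simp
  add_mem' := by
    intro a b ha hb c hc
    have h1 := ha c hc
    have h2 := hb c hc
    simp only [Pi.add_apply, add_mul, Finset.sum_add_distrib, h1, h2, add_zero]
  smul_mem' := by
    intro r x hx c hc
    have h := hx c hc
    simp only [Pi.smul_apply, smul_eq_mul, mul_assoc, ← Finset.mul_sum, h, mul_zero]

noncomputable def extMap {n : ℕ} (u : Fin n → F) :
    ((Fin n → F) × F) →ₗ[F] (Fin (n + 1) → F) where
  toFun p := Fin.snoc (p.1 + p.2 • u) p.2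
  map_add' p q := by
    funext i
    refine Fin.lastCases ?_ (fun j => ?_) i
    · simp [Fin.snoc_last]
    · simp only [Fin.snoc_castSucc, Prod.fst_add, Prod.snd_add, Pi.add_apply, Pi.smul_apply, smul_eq_mul, add_smul]
      ring
  map_smul' r p := by
    funext i
    refine Fin.lastCases ?_ (fun j => ?_) i
    · simp [Fin.snoc_last]
    · simp only [Fin.snoc_castSucc, Prod.smul_fst, Prod.smul_snd, Pi.add_apply,
        Pi.smul_apply, smul_eq_mul, RingHom.id_apply]
      ring

noncomputable def extCode {n : ℕ} (C : Submodule F (Fin n → F)) (u : Fin n → F) :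
    Submodule F (Fin (n + 1) → F) :=
  Submodule.map (extMap u) (C.prod ⊤)

end Defs
section Defs
variable {F : Type*} [Field F] [DecidableEq F]

def Vspace (F : Type*) [Field F] (k : ℕ) : Submodule F (Polynomial F) where
  carrier := {f | f.coeff (k - 1) = 0 ∧ ∀ j, k < j → f.coeff j = 0}
  zero_mem' := by simp
  add_mem' := by
    rintro f g ⟨hf1, hf2⟩ ⟨hg1, hg2⟩
    exact ⟨by simp [hf1, hg1], fun j hj => by simp [hf2 j hj, hg2 j hj]⟩
  smul_mem' := by
    rintro r f ⟨hf1, hf2⟩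
    exact ⟨by simp [hf1], fun j hj => by simp [hf2 j hj]⟩

noncomputable def esgrsMap {n : ℕ} (k : ℕ) (a v : Fin n → F) :
    Polynomial F →ₗ[F] (Fin (n + 1) → F) where
  toFun f := Fin.snoc (fun j => v j * f.eval (a j)) (f.coeff k)
  map_add' f g := by
    funext i
    refine Fin.lastCases ?_ (fun j => ?_) i
    · simp [Fin.snoc_last]
    · simp [Fin.snoc_castSucc, mul_add]
  map_smul' r f := by
    funext i
    refine Fin.lastCases ?_ (fun j => ?_) i
    · simp [Fin.snoc_last]
    · simp only [Fin.snoc_castSucc, Pi.smul_apply, smul_eq_mul, eval_smul,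
        RingHom.id_apply]
      ring

noncomputable def esgrs {n : ℕ} (k : ℕ) (a v : Fin n → F) :
    Submodule F (Fin (n + 1) → F) :=
  Submodule.map (esgrsMap k a v) (Vspace F k)

end Defs


section Aux
variable {F : Type*} [Field F] [DecidableEq F]

lemma hd_snoc {n : ℕ} (x y : Fin (n+1) → F) :
    hammingDist x y = hammingDist (x ∘ Fin.castSucc) (y ∘ Fin.castSucc)
      + (if x (Fin.last n) ≠ y (Fin.last n) then 1 else 0) := by
  simp only [hammingDist, Finset.card_filter]
  rw [Fin.sum_univ_castSucc]
  rfl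

lemma esgrsMap_last {n k : ℕ} (a v : Fin n → F) (f : Polynomial F) :
    esgrsMap k a v f (Fin.last n) = f.coeff k := by
  simp only [esgrsMap, LinearMap.coe_mk, AddHom.coe_mk, Fin.snoc_last]

lemma esgrsMap_castSucc {n k : ℕ} (a v : Fin n → F) (f : Polynomial F) (j : Fin n) :
    esgrsMap k a v f (Fin.castSucc j) = v j * f.eval (a j) := by
  simp only [esgrsMap, LinearMap.coe_mk, AddHom.coe_mk, Fin.snoc_castSucc]

lemma card_eval_zero_le {n : ℕ} (a : Fin n → F) (ha : Function.Injective a)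
    (d : Polynomial F) (hd : d ≠ 0) :
    (Finset.univ.filter (fun j => d.eval (a j) = 0)).card ≤ d.natDegree := by
  have h1 : ∀ j ∈ Finset.univ.filter (fun j => d.eval (a j) = 0),
      a j ∈ d.roots.toFinset := by
    intro j hj
    simp only [Finset.mem_filter] at hj
    rw [Multiset.mem_toFinset, Polynomial.mem_roots hd]
    exact hj.2
  calc (Finset.univ.filter (fun j => d.eval (a j) = 0)).card
      ≤ d.roots.toFinset.card :=
        Finset.card_le_card_of_injOn a h1 (Set.injOn_of_injective ha)
    _ ≤ d.roots.card := Multiset.toFinset_card_le _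
    _ ≤ d.natDegree := d.card_roots'

lemma dist_upper {n k : ℕ} (hk : 3 ≤ k) (hkn : k + 2 ≤ n)
    (a v : Fin n → F) (ha : Function.Injective a) (hv : ∀ j, v j ≠ 0)
    (u : Fin (n+1) → F) :
    distToCode (esgrs k a v) u ≤ n - k + 1 := by
  obtain ⟨T, -, hTcard⟩ := Finset.exists_subset_card_eq
    (show k - 1 ≤ (Finset.univ : Finset (Fin n)).card by
      simp only [Finset.card_univ, Fintype.card_fin]; omega)
  set t := u (Fin.last n) with ht
  set r : Fin n → F := fun j => u (Fin.castSucc j) / v j - t * (a j)^k with hr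
  set p : Polynomial F := Polynomial.C t * Polynomial.X ^ k + Lagrange.interpolate T a r
    with hp
  have hinj : Set.InjOn a T := Set.injOn_of_injective ha
  have hdeg : (Lagrange.interpolate T a r).degree < ((k - 1 : ℕ) : WithBot ℕ) := by
    have := Lagrange.degree_interpolate_lt r hinj
    rwa [hTcard] at this
  have hcoeff : ∀ m : ℕ, k - 1 ≤ m → (Lagrange.interpolate T a r).coeff m = 0 := by
    intro m hm
    exact Polynomial.coeff_eq_zero_of_degree_lt
      (hdeg.trans_le (by exact_mod_cast hm))
  have hpk : p.coeff k = t := by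
    rw [hp, Polynomial.coeff_add, Polynomial.coeff_C_mul, Polynomial.coeff_X_pow,
      hcoeff k (by omega)]
    simp
  have hmem : p ∈ Vspace F k := by
    constructor
    · rw [hp, Polynomial.coeff_add, Polynomial.coeff_C_mul, Polynomial.coeff_X_pow,
        hcoeff (k-1) le_rfl]
      simp only [if_neg (by omega : ¬ k - 1 = k)]
      ring
    · intro j hj
      rw [hp, Polynomial.coeff_add, Polynomial.coeff_C_mul, Polynomial.coeff_X_pow,
        hcoeff j (by omega)]
      simp only [if_neg (by omega : ¬ j = k)]
      ring
  have hmemC : esgrsMap k a v p ∈ esgrs k a v := ⟨p, hmem, rfl⟩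
  have hle : distToCode (esgrs k a v) u ≤ hammingDist u (esgrsMap k a v p) :=
    Nat.sInf_le ⟨esgrsMap k a v p, hmemC, rfl⟩
  refine hle.trans ?_
  rw [hd_snoc]
  have hlast : (esgrsMap k a v p) (Fin.last n) = u (Fin.last n) := by
    rw [esgrsMap_last, hpk]
  have h2 : (if u (Fin.last n) ≠ (esgrsMap k a v p) (Fin.last n) then 1 else 0) = 0 := by
    rw [hlast]; simp
  rw [h2, add_zero]
  have hsub : Finset.univ.filter
      (fun j => (u ∘ Fin.castSucc) j ≠ ((esgrsMap k a v p) ∘ Fin.castSucc) j)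
      ⊆ Finset.univ \ T := by
    intro j hj
    simp only [Finset.mem_filter, Function.comp_apply] at hj
    rw [Finset.mem_sdiff]
    refine ⟨Finset.mem_univ j, fun hjT => hj.2 ?_⟩
    rw [esgrsMap_castSucc, hp]
    rw [Polynomial.eval_add, Polynomial.eval_mul, Polynomial.eval_C,
      Polynomial.eval_pow, Polynomial.eval_X,
      Lagrange.eval_interpolate_at_node r hinj hjT, hr]
    have hrw : t * a j ^ k + (u (Fin.castSucc j) / v j - t * a j ^ k)
        = u (Fin.castSucc j) / v j := by ring
    rw [hrw, mul_div_cancel₀ _ (hv j)]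
  calc hammingDist (u ∘ Fin.castSucc) ((esgrsMap k a v p) ∘ Fin.castSucc)
      ≤ (Finset.univ \ T).card := Finset.card_le_card hsub
    _ ≤ n - k + 1 := by
        rw [Finset.card_sdiff_of_subset (Finset.subset_univ T), hTcard]
        simp only [Finset.card_univ, Fintype.card_fin]
        omega

lemma dist_lower {n k : ℕ} (hk : 3 ≤ k) (hkn : k + 2 ≤ n)
    (a v : Fin n → F) (ha : Function.Injective a) (hv : ∀ j, v j ≠ 0)
    (gkm1 : F) (hg : gkm1 ≠ 0) (f : Polynomial F) (hf : f ∈ Vspace F k)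
    (c : Fin (n+1) → F) (hc : c ∈ esgrs k a v) :
    n - k + 1 ≤ hammingDist
      (Fin.snoc (fun j => v j * (Polynomial.C gkm1 * Polynomial.X ^ (k - 1) + f).eval (a j))
        (f.coeff k)) c := by
  obtain ⟨h, hh, rfl⟩ := hc
  set g : Polynomial F := Polynomial.C gkm1 * Polynomial.X ^ (k-1) + f with hgdef
  set d : Polynomial F := g - h with hd
  set w : Fin (n+1) → F := Fin.snoc (fun j => v j * g.eval (a j)) (f.coeff k) with hw
  have hdkm1 : d.coeff (k-1) = gkm1 := by
    rw [hd, Polynomial.coeff_sub, hgdef, Polynomial.coeff_add, Polynomial.coeff_C_mul,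
      Polynomial.coeff_X_pow, hf.1, hh.1]
    simp
  have hdne : d ≠ 0 := fun h0 => hg (by rw [← hdkm1, h0, Polynomial.coeff_zero])
  have hdk : d.coeff k = f.coeff k - h.coeff k := by
    rw [hd, Polynomial.coeff_sub, hgdef, Polynomial.coeff_add, Polynomial.coeff_C_mul,
      Polynomial.coeff_X_pow]
    simp only [if_neg (by omega : ¬ k = k - 1)]
    ring
  have hdhigh : ∀ j, k < j → d.coeff j = 0 := by
    intro j hj
    rw [hd, Polynomial.coeff_sub, hgdef, Polynomial.coeff_add, Polynomial.coeff_C_mul,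
      Polynomial.coeff_X_pow, hf.2 j hj, hh.2 j hj]
    simp only [if_neg (by omega : ¬ j = k - 1)]
    ring
  -- disagreement on first n coordinates
  have hne : ∀ j : Fin n, d.eval (a j) ≠ 0 →
      (w ∘ Fin.castSucc) j ≠ ((esgrsMap k a v h) ∘ Fin.castSucc) j := by
    intro j hj hcontra
    apply hj
    have : v j * g.eval (a j) = v j * h.eval (a j) := by
      have h1 : (w ∘ Fin.castSucc) j = v j * g.eval (a j) := by
        simp only [hw, Function.comp_apply, Fin.snoc_castSucc]
      have h2 : ((esgrsMap k a v h) ∘ Fin.castSucc) j = v j * h.eval (a j) :=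
        esgrsMap_castSucc a v h j
      rw [h1, h2] at hcontra
      exact hcontra
    have := mul_left_cancel₀ (hv j) this
    rw [hd, Polynomial.eval_sub, this, sub_self]
  have key : ∀ m : ℕ, d.natDegree ≤ m →
      n - m ≤ hammingDist (w ∘ Fin.castSucc) ((esgrsMap k a v h) ∘ Fin.castSucc) := by
    intro m hm
    have h1 : (Finset.univ.filter (fun j => d.eval (a j) = 0)).card ≤ m :=
      (card_eval_zero_le a ha d hdne).trans hm
    have h2 : Finset.univ \ Finset.univ.filter (fun j => d.eval (a j) = 0) ⊆
        Finset.univ.filter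
          (fun j => (w ∘ Fin.castSucc) j ≠ ((esgrsMap k a v h) ∘ Fin.castSucc) j) := by
      intro j hj
      simp only [Finset.mem_sdiff, Finset.mem_filter, Finset.mem_univ, true_and] at hj ⊢
      exact hne j hj
    have h3 := Finset.card_le_card h2
    rw [Finset.card_sdiff_of_subset (Finset.filter_subset _ _)] at h3
    simp only [Finset.card_univ, Fintype.card_fin] at h3
    calc n - m ≤ n - (Finset.univ.filter (fun j => d.eval (a j) = 0)).card := by omega
      _ ≤ _ := h3
  rw [show hammingDist _ (esgrsMap k a v h) = hammingDist w (esgrsMap k a v h) from rfl,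
    hd_snoc]
  by_cases hke : h.coeff k = f.coeff k
  · -- degree ≤ k-1, need n-(k-1) ≥ n-k+1 from first coords alone
    have hdeg : d.natDegree ≤ k - 1 := by
      rw [Polynomial.natDegree_le_iff_coeff_eq_zero]
      intro j hj
      rcases eq_or_lt_of_le (show k ≤ j by omega) with rfl | hlt
      · rw [hdk, hke, sub_self]
      · exact hdhigh j hlt
    have := key (k-1) hdeg
    omega
  · have hdeg : d.natDegree ≤ k := by
      rw [Polynomial.natDegree_le_iff_coeff_eq_zero]
      intro j hj
      exact hdhigh j hj
    have h1 := key k hdeg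
    have hlast : (if w (Fin.last n) ≠ (esgrsMap k a v h) (Fin.last n) then 1 else 0) = 1 := by
      rw [if_pos]
      rw [esgrsMap_last, hw, Fin.snoc_last]
      exact fun hcontra => hke hcontra.symm
    omega

end Aux

theorem stmt_11 {F : Type*} [Field F] [Fintype F] [DecidableEq F] {n k : ℕ}
    (hk : 3 ≤ k) (hkn : k + 2 ≤ n) (hn : n ≤ Fintype.card F)
    (a v : Fin n → F) (ha : Function.Injective a) (hv : ∀ j, v j ≠ 0)
    (gkm1 : F) (hg : gkm1 ≠ 0) (f : Polynomial F) (hf : f ∈ Vspace F k)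
    (ulast vlast : F) (huv : ulast * vlast = f.coeff k) :
    IsDeepHole (esgrs k a v)
      (Fin.snoc
        (fun j => v j * (Polynomial.C gkm1 * Polynomial.X ^ (k - 1) + f).eval (a j))
        (ulast * vlast)) := by
  rw [huv]
  set C := esgrs k a v with hC
  set w : Fin (n+1) → F := Fin.snoc
    (fun j => v j * (Polynomial.C gkm1 * Polynomial.X ^ (k - 1) + f).eval (a j))
    (f.coeff k) with hwdef
  have hA : ∀ u : Fin (n+1) → F, distToCode C u ≤ n - k + 1 :=
    fun u => dist_upper hk hkn a v ha hv u
  have hne : ∀ u : Fin (n+1) → F, {d | ∃ c ∈ C, hammingDist u c = d}.Nonempty :=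
    fun u => ⟨hammingDist u 0, 0, C.zero_mem, rfl⟩
  have hB : n - k + 1 ≤ distToCode C w := by
    apply le_csInf (hne w)
    rintro d ⟨c, hc, rfl⟩
    exact dist_lower hk hkn a v ha hv gkm1 hg f hf c hc
  have hbdd : BddAbove {d | ∃ u : Fin (n+1) → F, distToCode C u = d} := by
    refine ⟨n - k + 1, ?_⟩
    rintro d ⟨u, rfl⟩
    exact hA u
  have h1 : distToCode C w ≤ covRad C := le_csSup hbdd ⟨w, rfl⟩
  have h2 : covRad C ≤ n - k + 1 := csSup_le ⟨distToCode C w, w, rfl⟩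
    (by rintro d ⟨u, rfl⟩; exact hA u)
  show distToCode C w = covRad C
  omega
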